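/- If w, w' ∈ F(n) satisfy w' = w·a where a lies in the normal closure A of {x_{s1},...,x_{sl}}, then for any monomial X_{j_1}⋯X_{j_k} in which none of the variables X_{s1},...,X_{sl} occurs, the coefficients of that monomial in the Magnus expansions of w and w' agree. -/

import Mathlib

/-- The ring `ℤ⟨⟨X_1,…,X_n⟩⟩` of formal power series in `n` non-commuting variables with
integer coefficients, realized as coefficient functions on words in the variables. -/
def NC (n : ℕ) : Type := List (Fin n) → ℤ

namespace NC

variable {n : ℕ}

instance : AddCommGroup (NC n) := Pi.addCommGroup

instance : One (NC n) := ⟨fun w => if w = [] then 1 else 0⟩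

/-- Convolution (Cauchy) product of non-commutative power series. -/
instance : Mul (NC n) :=
  ⟨fun f g w => ∑ k ∈ Finset.range (w.length + 1), f (w.take k) * g (w.drop k)⟩

theorem mul_apply (f g : NC n) (w : List (Fin n)) :
    (f * g) w = ∑ k ∈ Finset.range (w.length + 1), f (w.take k) * g (w.drop k) := rfl

theorem one_apply (w : List (Fin n)) : (1 : NC n) w = if w = [] then 1 else 0 := rfl

theorem zero_apply (w : List (Fin n)) : (0 : NC n) w = 0 := rfl

theorem add_apply (f g : NC n) (w : List (Fin n)) : (f + g) w = f w + g w := rfl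

protected theorem mul_assoc (f g h : NC n) : f * g * h = f * (g * h) := by
  funext w
  rw [mul_apply, mul_apply]
  calc
    ∑ j ∈ Finset.range (w.length + 1), (f * g) (w.take j) * h (w.drop j)
        = ∑ j ∈ Finset.range (w.length + 1), ∑ i ∈ Finset.range (j + 1),
            f (w.take i) * g ((w.drop i).take (j - i)) * h (w.drop j) := by
          refine Finset.sum_congr rfl ?_
          intro j hj
          simp only [Finset.mem_range] at hj
          rw [mul_apply, Finset.sum_mul]
          have hlen : (w.take j).length = j := by rw [List.length_take]; omega
          rw [hlen]
          refine Finset.sum_congr rfl ?_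
          intro i hi
          simp only [Finset.mem_range] at hi
          have h1 : (w.take j).take i = w.take i := by
            rw [List.take_take]; congr 1; omega
          have h2 : (w.take j).drop i = (w.drop i).take (j - i) := List.drop_take
          rw [h1, h2]
    _ = ∑ i ∈ Finset.range (w.length + 1), ∑ k ∈ Finset.range ((w.length - i) + 1),
            f (w.take i) * g ((w.drop i).take k) * h (w.drop (i + k)) := by
          rw [Finset.sum_sigma', Finset.sum_sigma']
          refine Finset.sum_nbij' (fun p => ⟨p.2, p.1 - p.2⟩) (fun q => ⟨q.1 + q.2, q.1⟩)
            ?_ ?_ ?_ ?_ ?_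
          · rintro ⟨j, i⟩ hp
            simp only [Finset.mem_sigma, Finset.mem_range] at hp ⊢
            omega
          · rintro ⟨i, k⟩ hq
            simp only [Finset.mem_sigma, Finset.mem_range] at hq ⊢
            omega
          · rintro ⟨j, i⟩ hp
            simp only [Finset.mem_sigma, Finset.mem_range] at hp
            have hji : i + (j - i) = j := by omega
            simp [hji]
          · rintro ⟨i, k⟩ hq
            simp only [Finset.mem_sigma, Finset.mem_range] at hq
            have hik : i + k - i = k := by omega
            simp [hik]
          · rintro ⟨j, i⟩ hp
            simp only [Finset.mem_sigma, Finset.mem_range] at hp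
            have : i + (j - i) = j := by omega
            rw [this]
    _ = ∑ i ∈ Finset.range (w.length + 1), f (w.take i) * (g * h) (w.drop i) := by
          refine Finset.sum_congr rfl ?_
          intro i hi
          simp only [Finset.mem_range] at hi
          rw [mul_apply, Finset.mul_sum]
          have hlen : (w.drop i).length = w.length - i := by rw [List.length_drop]
          rw [hlen]
          refine Finset.sum_congr rfl ?_
          intro k hk
          rw [List.drop_drop]
          ring_nf

protected theorem one_mul (f : NC n) : 1 * f = f := by
  funext w
  rw [mul_apply]
  rw [Finset.sum_eq_single 0]
  · simp [one_apply]
  · intro b hb hb0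
    rw [one_apply]
    rw [if_neg, zero_mul]
    intro hnil
    rcases List.take_eq_nil_iff.mp hnil with h | h
    · exact hb0 h
    · subst h; simp at hb; exact hb0 hb
  · intro h; simp at h

protected theorem mul_one (f : NC n) : f * 1 = f := by
  funext w
  rw [mul_apply]
  rw [Finset.sum_eq_single w.length]
  · simp [one_apply]
  · intro b hb hbne
    rw [one_apply, if_neg, mul_zero]
    intro hnil
    have := List.drop_eq_nil_iff.mp hnil
    simp at hb
    omega
  · intro h; simp at h

instance instRing : Ring (NC n) where
  __ := (inferInstance : AddCommGroup (NC n))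
  mul := (· * ·)
  one := 1
  mul_assoc := NC.mul_assoc
  one_mul := NC.one_mul
  mul_one := NC.mul_one
  left_distrib f g h := by
    funext w
    simp [mul_apply, add_apply, mul_add, Finset.sum_add_distrib]
  right_distrib f g h := by
    funext w
    simp [mul_apply, add_apply, add_mul, Finset.sum_add_distrib]
  zero_mul f := by
    funext w
    simp [mul_apply, zero_apply]
  mul_zero f := by
    funext w
    simp [mul_apply, zero_apply]

/-- The variable `X_i` as a power series. -/
def X (i : Fin n) : NC n := fun w => if w = [i] then 1 else 0

/-- The geometric series `1 - X_i + X_i² - X_i³ + ⋯`. -/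
def geom (i : Fin n) : NC n :=
  fun w => if ∀ j ∈ w, j = i then (-1) ^ w.length else 0

theorem val_inv (i : Fin n) : (1 + X i) * geom i = 1 := by
  funext w
  rw [mul_apply]
  cases w with
  | nil => simp [one_apply, add_apply, X, geom]
  | cons a t =>
    rw [one_apply, if_neg (by simp)]
    rw [Finset.sum_eq_add 0 1 (by omega)]
    · have h0 : ((a :: t).take 0) = ([] : List (Fin n)) := rfl
      have h1 : ((a :: t).take 1) = [a] := rfl
      rw [h0, h1]
      simp only [List.drop_zero, List.drop_one]
      by_cases hai : a = i
      · subst hai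
        simp only [add_apply, one_apply, X, geom]
        by_cases ht : ∀ j ∈ t, j = a
        · simp [ht, pow_succ]
          convert neg_add_cancel ((-1 : ℤ) ^ t.length) using 2
          all_goals exact if_pos ht
        · have hat : ¬ ∀ j ∈ (a :: t), j = a := by simp [ht]
          simp [ht, hat]
      · simp only [add_apply, one_apply, X, geom]
        have h2 : ¬ ∀ j ∈ (a :: t), j = i := by
          intro hc; exact hai (hc a (by simp))
        have h3 : ¬ ([a] = [i]) := by simp [hai]
        simp [h2, h3]
        exact fun hc => absurd hc hai
    · intro c hc ⟨hc0, hc1⟩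
      simp only [Finset.mem_range, List.length_cons] at hc
      have : ((a :: t).take c) ≠ [] ∧ ((a :: t).take c) ≠ [i] := by
        constructor
        · simp [List.take_eq_nil_iff, hc0]
        · intro hcon
          have := congrArg List.length hcon
          simp [List.length_take] at this
          omega
      simp [add_apply, one_apply, X, this.1, this.2]
    · intro h; simp at h
    · intro h; simp at h

theorem inv_val (i : Fin n) : geom i * (1 + X i) = 1 := by
  funext w
  rw [mul_apply]
  rcases List.eq_nil_or_concat w with hw | ⟨t, a, hw⟩
  · subst hw; simp [one_apply, add_apply, X, geom]
  · rw [List.concat_eq_append] at hw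
    subst hw
    rw [one_apply, if_neg (by simp)]
    have hlen : (t ++ [a]).length = t.length + 1 := by simp
    rw [Finset.sum_eq_add t.length (t.length + 1) (by omega)]
    · have h1 : (t ++ [a]).take t.length = t := List.take_left
      have h2 : (t ++ [a]).drop t.length = [a] := List.drop_left
      have h3 : (t ++ [a]).take (t.length + 1) = t ++ [a] := by
        rw [List.take_of_length_le (by simp)]
      have h4 : (t ++ [a]).drop (t.length + 1) = [] := by
        rw [List.drop_of_length_le (by simp)]
      rw [h1, h2, h3, h4]
      have e1 : ((1 : NC n) + X i) [a] = if a = i then 1 else 0 := by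
        by_cases h : a = i <;> simp [add_apply, one_apply, X, h]
      have e2 : ((1 : NC n) + X i) [] = 1 := by
        simp [add_apply, one_apply, X]
      rw [e1, e2, mul_one]
      by_cases ha : a = i
      · rw [if_pos ha, mul_one]
        by_cases ht : ∀ j ∈ t, j = i
        · have hw' : ∀ j ∈ t ++ [a], j = i := by
            intro j hj
            rcases List.mem_append.mp hj with h | h
            · exact ht j h
            · simp only [List.mem_singleton] at h
              rw [h, ha]
          simp only [geom, if_pos ht, if_pos hw', hlen, pow_succ]
          ring
        · have hw' : ¬ ∀ j ∈ t ++ [a], j = i :=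
            fun hc => ht fun j hj => hc j (List.mem_append_left _ hj)
          simp only [geom, if_neg ht, if_neg hw']
          ring
      · rw [if_neg ha, mul_zero, zero_add]
        have hw' : ¬ ∀ j ∈ t ++ [a], j = i :=
          fun hc => ha (hc a (List.mem_append_right t (by simp)))
        simp only [geom, if_neg hw']
    · intro c hc ⟨hc0, hc1⟩
      simp only [Finset.mem_range, hlen] at hc
      have hne : ((t ++ [a]).drop c) ≠ [] ∧ ((t ++ [a]).drop c) ≠ [i] := by
        constructor
        · intro hcon
          have := congrArg List.length hcon
          simp at this
          omega
        · intro hcon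
          have := congrArg List.length hcon
          simp at this
          omega
      simp [add_apply, one_apply, X, hne.1, hne.2]
    · intro h
      exact absurd (by simp only [Finset.mem_range, hlen]; omega) h
    · intro h
      exact absurd (by simp only [Finset.mem_range, hlen]; omega) h

/-- `1 + X_i` as a unit of `ℤ⟨⟨X_1,…,X_n⟩⟩`, with inverse `1 - X_i + X_i² - ⋯`. -/
def magnusUnit (i : Fin n) : (NC n)ˣ where
  val := 1 + X i
  inv := geom i
  val_inv := val_inv i
  inv_val := inv_val i

end NC

/-- The Magnus expansion `F(n) → ℤ⟨⟨X_1,…,X_n⟩⟩ˣ`, `x_i ↦ 1 + X_i`. -/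
def magnus (n : ℕ) : FreeGroup (Fin n) →* (NC n)ˣ := FreeGroup.lift NC.magnusUnit

/-- The coefficient of the monomial `X_{u 0} ⋯ X_{u k}` in the Magnus expansion of `w`. -/
def magnusCoeff {n : ℕ} (w : FreeGroup (Fin n)) (u : List (Fin n)) : ℤ :=
  ((magnus n w : (NC n)ˣ) : NC n) u

/-! Substituting `X_s ↦ 0` for `s ∈ S` is a ring endomorphism of `ℤ⟨⟨X_1,…,X_n⟩⟩` that keeps the
coefficients of monomials avoiding `S`. After the Magnus expansion it sends every `x_s` (`s ∈ S`),
hence all of `A`, to `1`; so `w` and `w·a` have the same image, i.e. the same coefficients on the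
monomials avoiding `S`. -/

namespace NC

variable {n : ℕ}

open Classical in
noncomputable def killVars (S : Set (Fin n)) (f : NC n) : NC n :=
  fun w => if ∀ j ∈ w, j ∉ S then f w else 0

section killVars

variable {S : Set (Fin n)} (f : NC n) {w : List (Fin n)}

theorem killVars_apply_of_forall_notMem (hw : ∀ j ∈ w, j ∉ S) : killVars S f w = f w :=
  if_pos hw

theorem killVars_apply_of_not_forall_notMem (hw : ¬∀ j ∈ w, j ∉ S) : killVars S f w = 0 :=
  if_neg hw

end killVars

/-- `killVars S` is multiplicative because a word avoids `S` iff both halves of each of its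
splittings do. -/
noncomputable def killVarsHom (S : Set (Fin n)) : NC n →+* NC n where
  toFun := killVars S
  map_zero' := funext fun _ => ite_self 0
  map_add' f g := funext fun w => by
    by_cases hw : ∀ j ∈ w, j ∉ S
    · simp only [add_apply, killVars_apply_of_forall_notMem _ hw]
    · simp only [add_apply, killVars_apply_of_not_forall_notMem _ hw, add_zero]
  map_one' := funext fun w => by
    by_cases hw : ∀ j ∈ w, j ∉ S
    · exact killVars_apply_of_forall_notMem _ hw
    · have hne : w ≠ [] := by rintro rfl; simp at hw
      rw [killVars_apply_of_not_forall_notMem _ hw, one_apply, if_neg hne]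
  map_mul' f g := funext fun w => by
    rw [mul_apply]
    by_cases hw : ∀ j ∈ w, j ∉ S
    · rw [killVars_apply_of_forall_notMem _ hw, mul_apply]
      refine Finset.sum_congr rfl fun k _ => ?_
      rw [killVars_apply_of_forall_notMem _ fun j hj => hw j (List.mem_of_mem_take hj),
        killVars_apply_of_forall_notMem _ fun j hj => hw j (List.mem_of_mem_drop hj)]
    · rw [killVars_apply_of_not_forall_notMem _ hw]
      refine (Finset.sum_eq_zero fun k _ => ?_).symm
      by_cases htake : ∀ j ∈ w.take k, j ∉ S
      · by_cases hdrop : ∀ j ∈ w.drop k, j ∉ S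
        · refine (hw fun j hj => ?_).elim
          rw [← List.take_append_drop k w, List.mem_append] at hj
          exact hj.elim (htake j) (hdrop j)
        · rw [killVars_apply_of_not_forall_notMem _ hdrop, mul_zero]
      · rw [killVars_apply_of_not_forall_notMem _ htake, zero_mul]

theorem killVars_X_of_mem {S : Set (Fin n)} {s : Fin n} (hs : s ∈ S) : killVars S (X s) = 0 :=
  funext fun w => by
    by_cases hw : ∀ j ∈ w, j ∉ S
    · refine (killVars_apply_of_forall_notMem _ hw).trans (if_neg ?_)
      rintro rfl
      exact hw s (List.mem_singleton_self s) hs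
    · exact killVars_apply_of_not_forall_notMem _ hw

end NC

theorem killVarsHom_magnus_of_mem_normalClosure {n : ℕ} {S : Set (Fin n)}
    {a : FreeGroup (Fin n)} (ha : a ∈ Subgroup.normalClosure (FreeGroup.of '' S)) :
    NC.killVarsHom S (magnus n a) = 1 := by
  let φ := (Units.map (NC.killVarsHom S).toMonoidHom).comp (magnus n)
  have hgen : FreeGroup.of '' S ⊆ φ.ker := by
    rintro - ⟨s, hs, rfl⟩
    refine MonoidHom.mem_ker.2 (Units.ext ?_)
    change NC.killVarsHom S (magnus n (FreeGroup.of s)) = 1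
    rw [magnus, FreeGroup.lift_apply_of]
    change NC.killVarsHom S (1 + NC.X s) = 1
    rw [map_add, map_one]
    exact add_eq_left.2 (NC.killVars_X_of_mem hs)
  exact congrArg Units.val (MonoidHom.mem_ker.1 (Subgroup.normalClosure_le_normal hgen ha))

theorem magnusCoeff_eq_killVarsHom_magnus {n : ℕ} (S : Set (Fin n)) (w : FreeGroup (Fin n))
    {u : List (Fin n)} (hu : ∀ j ∈ u, j ∉ S) :
    magnusCoeff w u = NC.killVarsHom S (magnus n w) u :=
  (NC.killVars_apply_of_forall_notMem _ hu).symm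

/-- If `w' = w·a` with `a` in the normal closure `A` of the generators `{x_s : s ∈ S}`,
then for any monomial `X_{j_1}⋯X_{j_k}` in which no variable `X_s` (`s ∈ S`) occurs,
the coefficients of that monomial in the Magnus expansions of `w` and `w'` agree. -/
theorem magnusCoeff_mul_normalClosure (n : ℕ) (S : Finset (Fin n))
    (w w' a : FreeGroup (Fin n))
    (ha : a ∈ Subgroup.normalClosure (FreeGroup.of '' (S : Set (Fin n))))
    (hw' : w' = w * a)
    (u : List (Fin n)) (hu : ∀ j ∈ u, j ∉ S) :
    magnusCoeff w' u = magnusCoeff w u := by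
  rw [hw', magnusCoeff_eq_killVarsHom_magnus S _ hu, magnusCoeff_eq_killVarsHom_magnus S _ hu,
    map_mul, Units.val_mul, map_mul, killVarsHom_magnus_of_mem_normalClosure ha, mul_one]
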